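/- arXiv:2012.07754 — 3 statements merged into one kernel-verified Lean document; each statement's English description precedes it below -/
import Mathlib

section
/- Let A ∈ ℝ^{l×m×n} be a 3-tensor and let U ∈ ℝ^{l×r₁}, V ∈ ℝ^{m×r₂}, W ∈ ℝ^{n×r₃} be matrices with orthonormal columns (UᵀU = I, VᵀV = I, WᵀW = I). Set F = A·(U,V,W) ∈ ℝ^{r₁×r₂×r₃} (the contraction of A by the transposed matrices in each mode). Then ‖A − (U,V,W)·F‖² = ‖A‖² − ‖F‖², and consequently for every core tensor G ∈ ℝ^{r₁×r₂×r₃} one has ‖A − (U,V,W)·G‖ ≥ ‖A − (U,V,W)·F‖; that is, F = A·(U,V,W) is the optimal core tensor for fixed U, V, W. -/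
/-!
Flatten a tensor `A ∈ ℝ^{l×m×n}` to the vector `a` indexed by `(Fin l × Fin m) × Fin n`. Then
`(U,V,W)·G` becomes `K g` for the Kronecker product `K = U ⊗ V ⊗ W`, the contraction `A·(U,V,W)`
becomes `Kᵀ a`, and the Frobenius norm becomes the Euclidean one. Orthonormal columns of
`U, V, W` give `KᵀK = 1`, hence the least-squares identity
`‖a − K g‖² = ‖a‖² − ‖Kᵀ a‖² + ‖Kᵀ a − g‖²`, whose last term vanishes exactly at `g = Kᵀ a`.
-/

open scoped BigOperators
open Matrix

/-- Multilinear product of a 3-tensor by three matrices: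
`((U,V,W)·A)_{ijk} = Σ_{α,β,γ} u_{iα} v_{jβ} w_{kγ} a_{αβγ}`. -/
def tmul {l m n p q r : ℕ} (U : Matrix (Fin p) (Fin l) ℝ)
    (V : Matrix (Fin q) (Fin m) ℝ) (W : Matrix (Fin r) (Fin n) ℝ)
    (A : Fin l → Fin m → Fin n → ℝ) : Fin p → Fin q → Fin r → ℝ :=
  fun i j k => ∑ α, ∑ β, ∑ γ, U i α * V j β * W k γ * A α β γ

/-- Contraction `A·(X,Y,Z) := (Xᵀ,Yᵀ,Zᵀ)·A`. -/
def contr {l m n r₁ r₂ r₃ : ℕ} (A : Fin l → Fin m → Fin n → ℝ)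
    (X : Matrix (Fin l) (Fin r₁) ℝ) (Y : Matrix (Fin m) (Fin r₂) ℝ)
    (Z : Matrix (Fin n) (Fin r₃) ℝ) : Fin r₁ → Fin r₂ → Fin r₃ → ℝ :=
  tmul Xᵀ Yᵀ Zᵀ A

/-- Frobenius norm of a 3-tensor. -/
noncomputable def tnorm {l m n : ℕ} (A : Fin l → Fin m → Fin n → ℝ) : ℝ :=
  Real.sqrt (∑ i, ∑ j, ∑ k, (A i j k) ^ 2)

open scoped Kronecker

section OrthonormalColumns

variable {ι κ R : Type*} [Fintype ι] [Fintype κ] [DecidableEq κ] [CommRing R]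
  {K : Matrix ι κ R}

theorem mulVec_dotProduct_mulVec_of_transpose_mul_self_eq_one (hK : Kᵀ * K = 1) (u v : κ → R) :
    K *ᵥ u ⬝ᵥ K *ᵥ v = u ⬝ᵥ v := by
  rw [dotProduct_mulVec, ← vecMul_transpose, vecMul_vecMul, hK, vecMul_one]

theorem sub_mulVec_dotProduct_sub_mulVec_of_transpose_mul_self_eq_one (hK : Kᵀ * K = 1)
    (a : ι → R) (g : κ → R) :
    (a - K *ᵥ g) ⬝ᵥ (a - K *ᵥ g)
      = a ⬝ᵥ a - Kᵀ *ᵥ a ⬝ᵥ Kᵀ *ᵥ a + (Kᵀ *ᵥ a - g) ⬝ᵥ (Kᵀ *ᵥ a - g) := by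
  have hadj : a ⬝ᵥ K *ᵥ g = Kᵀ *ᵥ a ⬝ᵥ g := by
    rw [dotProduct_mulVec, ← mulVec_transpose]
  simp only [sub_dotProduct, dotProduct_sub, dotProduct_comm (K *ᵥ g) a,
    dotProduct_comm g (Kᵀ *ᵥ a), hadj]
  rw [mulVec_dotProduct_mulVec_of_transpose_mul_self_eq_one hK]
  ring

end OrthonormalColumns

theorem kronecker_transpose_mul_self_eq_one {l m n p R : Type*} [Fintype l] [Fintype n]
    [DecidableEq m] [DecidableEq p] [CommSemiring R] {A : Matrix l m R} {B : Matrix n p R}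
    (hA : Aᵀ * A = 1) (hB : Bᵀ * B = 1) : (A ⊗ₖ B)ᵀ * (A ⊗ₖ B) = 1 := by
  rw [← kroneckerMap_transpose, ← mul_kronecker_mul, hA, hB, one_kronecker_one]

def tvec {α β γ R : Type*} (A : α → β → γ → R) : (α × β) × γ → R :=
  Function.uncurry (Function.uncurry A)

theorem tvec_sub {α β γ R : Type*} [Sub R] (A B : α → β → γ → R) :
    tvec (A - B) = tvec A - tvec B := rfl

theorem tnorm_nonneg {l m n : ℕ} (A : Fin l → Fin m → Fin n → ℝ) : 0 ≤ tnorm A :=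
  Real.sqrt_nonneg _

theorem tnorm_zero {l m n : ℕ} : tnorm (0 : Fin l → Fin m → Fin n → ℝ) = 0 := by
  simp [tnorm]

theorem tnorm_sq {l m n : ℕ} (A : Fin l → Fin m → Fin n → ℝ) :
    tnorm A ^ 2 = tvec A ⬝ᵥ tvec A := by
  rw [tnorm, Real.sq_sqrt (by positivity)]
  simp only [tvec, dotProduct, Fintype.sum_prod_type, Function.uncurry_apply_pair, sq]

theorem tvec_tmul {l m n p q r : ℕ} (U : Matrix (Fin p) (Fin l) ℝ)
    (V : Matrix (Fin q) (Fin m) ℝ) (W : Matrix (Fin r) (Fin n) ℝ)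
    (A : Fin l → Fin m → Fin n → ℝ) :
    tvec (tmul U V W A) = (U ⊗ₖ V ⊗ₖ W) *ᵥ tvec A := by
  ext ⟨⟨i, j⟩, k⟩
  simp only [tvec, tmul, mulVec, dotProduct, Fintype.sum_prod_type, kroneckerMap_apply,
    Function.uncurry_apply_pair]

theorem tvec_contr {l m n r₁ r₂ r₃ : ℕ} (A : Fin l → Fin m → Fin n → ℝ)
    (X : Matrix (Fin l) (Fin r₁) ℝ) (Y : Matrix (Fin m) (Fin r₂) ℝ)
    (Z : Matrix (Fin n) (Fin r₃) ℝ) :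
    tvec (contr A X Y Z) = (X ⊗ₖ Y ⊗ₖ Z)ᵀ *ᵥ tvec A := by
  rw [contr, tvec_tmul, kroneckerMap_transpose, kroneckerMap_transpose]

theorem optimal_core_tensor
    (l m n r₁ r₂ r₃ : ℕ) (A : Fin l → Fin m → Fin n → ℝ)
    (U : Matrix (Fin l) (Fin r₁) ℝ) (V : Matrix (Fin m) (Fin r₂) ℝ)
    (W : Matrix (Fin n) (Fin r₃) ℝ)
    (hU : Uᵀ * U = 1) (hV : Vᵀ * V = 1) (hW : Wᵀ * W = 1)
    (F : Fin r₁ → Fin r₂ → Fin r₃ → ℝ) (hF : F = contr A U V W) :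
    tnorm (A - tmul U V W F) ^ 2 = tnorm A ^ 2 - tnorm F ^ 2 ∧
    ∀ G : Fin r₁ → Fin r₂ → Fin r₃ → ℝ,
      tnorm (A - tmul U V W F) ≤ tnorm (A - tmul U V W G) := by
  have hK : (U ⊗ₖ V ⊗ₖ W)ᵀ * (U ⊗ₖ V ⊗ₖ W) = 1 :=
    kronecker_transpose_mul_self_eq_one (kronecker_transpose_mul_self_eq_one hU hV) hW
  have residual (G : Fin r₁ → Fin r₂ → Fin r₃ → ℝ) :
      tnorm (A - tmul U V W G) ^ 2 = tnorm A ^ 2 - tnorm F ^ 2 + tnorm (F - G) ^ 2 := by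
    rw [tnorm_sq, tnorm_sq, tnorm_sq, tnorm_sq, tvec_sub, tvec_sub, tvec_tmul, hF, tvec_contr,
      sub_mulVec_dotProduct_sub_mulVec_of_transpose_mul_self_eq_one hK]
  have pythagoras : tnorm (A - tmul U V W F) ^ 2 = tnorm A ^ 2 - tnorm F ^ 2 := by
    rw [residual F, sub_self, tnorm_zero, zero_pow two_ne_zero, add_zero]
  refine ⟨pythagoras, fun G => ?_⟩
  refine (pow_le_pow_iff_left₀ (tnorm_nonneg _) (tnorm_nonneg _) two_ne_zero).mp ?_
  rw [pythagoras, residual G]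
  exact le_add_of_nonneg_right (sq_nonneg _)
end

section
/- Let A ∈ ℝ^{l×m×n} be a 3-tensor and let r₁ ≤ l, r₂ ≤ m, r₃ ≤ n. For every 3-tensor B ∈ ℝ^{l×m×n} whose multilinear rank is at most (r₁,r₂,r₃), one has ‖A − B‖² ≥ ‖A‖² − sup { ‖A·(X,Y,Z)‖² : X ∈ ℝ^{l×r₁}, Y ∈ ℝ^{m×r₂}, Z ∈ ℝ^{n×r₃}, XᵀX = I, YᵀY = I, ZᵀZ = I }. Moreover, for every X, Y, Z with orthonormal columns, the tensor B = (X,Y,Z)·(A·(X,Y,Z)) has multilinear rank at most (r₁,r₂,r₃) and satisfies ‖A − B‖² = ‖A‖² − ‖A·(X,Y,Z)‖². Hence the best rank-(r₁,r₂,r₃) approximation problem min ‖A−B‖² is equivalent to the maximization problem max ‖A·(X,Y,Z)‖² over matrices X, Y, Z with orthonormal columns. -/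
/-!
STATEMENT 2: For a 3-tensor `A ∈ ℝ^{l×m×n}` and `r₁ ≤ l`, `r₂ ≤ m`, `r₃ ≤ n`:
(i) every `B` of multilinear rank at most `(r₁,r₂,r₃)` satisfies
`‖A − B‖² ≥ ‖A‖² − sup {‖A·(X,Y,Z)‖² : X,Y,Z with orthonormal columns}`;
(ii) for every `X,Y,Z` with orthonormal columns, `B = (X,Y,Z)·(A·(X,Y,Z))`
has multilinear rank at most `(r₁,r₂,r₃)` and
`‖A − B‖² = ‖A‖² − ‖A·(X,Y,Z)‖²`.
Hence minimizing `‖A − B‖²` is equivalent to maximizing `‖A·(X,Y,Z)‖²`.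
-/

open scoped BigOperators
open Matrix

/-- The multilinear rank of `B` is at most `(r₁,r₂,r₃)`: the spans of the
mode-1, mode-2 and mode-3 fibers have dimensions at most `r₁`, `r₂`, `r₃`. -/
def mrankLe {l m n : ℕ} (B : Fin l → Fin m → Fin n → ℝ) (r₁ r₂ r₃ : ℕ) : Prop :=
  Module.finrank ℝ
      (Submodule.span ℝ {v : Fin l → ℝ | ∃ j k, v = fun i => B i j k}) ≤ r₁ ∧
  Module.finrank ℝ
      (Submodule.span ℝ {v : Fin m → ℝ | ∃ i k, v = fun j => B i j k}) ≤ r₂ ∧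
  Module.finrank ℝ
      (Submodule.span ℝ {v : Fin n → ℝ | ∃ i j, v = fun k => B i j k}) ≤ r₃

/-!
Flattening `A` to a vector `a` indexed by `Fin l × Fin m × Fin n` turns `(X,Y,Z)·E` into
`K *ᵥ e` and `A·(X,Y,Z)` into `Kᵀ *ᵥ a` for the Kronecker product `K = X ⊗ Y ⊗ Z`, which
has orthonormal columns when `X`, `Y`, `Z` do. Expanding the square gives the Pythagorean
identity `‖A - (X,Y,Z)·E‖² = ‖A‖² - ‖A·(X,Y,Z)‖² + ‖E - A·(X,Y,Z)‖²`, which yields both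
parts once every `B` of multilinear rank at most `(r₁,r₂,r₃)` is written as `(X,Y,Z)·E`:
choose `X`, `Y`, `Z` with orthonormal columns whose column spaces contain the fibers of `B`,
so that the projections `XXᵀ`, `YYᵀ`, `ZZᵀ` fix them.
-/

open Module
open scoped Kronecker

theorem Submodule.exists_le_finrank_eq {K V : Type*} [DivisionRing K] [AddCommGroup V]
    [Module K V] [FiniteDimensional K V] (U : Submodule K V) {n : ℕ}
    (hU : finrank K U ≤ n) (hn : n ≤ finrank K V) :
    ∃ W : Submodule K V, U ≤ W ∧ finrank K W = n := by
  induction n with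
  | zero => exact ⟨U, le_rfl, Nat.le_zero.mp hU⟩
  | succ n ih =>
    rcases hU.eq_or_lt with hU | hU
    · exact ⟨U, le_rfl, hU⟩
    obtain ⟨W, hUW, hW⟩ := ih (Nat.lt_succ_iff.mp hU) (by omega)
    obtain ⟨x, -, hx⟩ :=
      SetLike.exists_of_lt (Submodule.lt_top_of_finrank_lt_finrank (s := W) (by omega))
    exact ⟨W ⊔ K ∙ x, hUW.trans le_sup_left, by rw [finrank_sup_span_singleton hx, hW]⟩

namespace Matrix

section OrthonormalColumns

variable {R : Type*} [CommSemiring R] {l m n p : Type*} [Fintype m] [DecidableEq n]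

theorem transpose_kronecker_mul_self [Fintype l] [DecidableEq p] {X : Matrix l n R}
    {Y : Matrix m p R} (hX : Xᵀ * X = 1) (hY : Yᵀ * Y = 1) : (X ⊗ₖ Y)ᵀ * (X ⊗ₖ Y) = 1 := by
  rw [← kroneckerMap_transpose, ← mul_kronecker_mul, hX, hY, one_kronecker_one]

theorem mul_transpose_mulVec_of_mem_range [Fintype n] {X : Matrix m n R} (hX : Xᵀ * X = 1)
    {v : m → R} (hv : v ∈ LinearMap.range X.mulVecLin) : (X * Xᵀ) *ᵥ v = v := by
  obtain ⟨w, rfl⟩ := hv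
  rw [mulVecLin_apply, mulVec_mulVec, Matrix.mul_assoc, hX, Matrix.mul_one]

theorem dotProduct_sub_mulVec_self [Fintype n] {K : Matrix m n ℝ} (hK : Kᵀ * K = 1)
    (a : m → ℝ) (e : n → ℝ) :
    (a - K *ᵥ e) ⬝ᵥ (a - K *ᵥ e) =
      a ⬝ᵥ a - (Kᵀ *ᵥ a) ⬝ᵥ (Kᵀ *ᵥ a) + (e - Kᵀ *ᵥ a) ⬝ᵥ (e - Kᵀ *ᵥ a) := by
  have hadj : ∀ f b, (K *ᵥ f) ⬝ᵥ b = f ⬝ᵥ (Kᵀ *ᵥ b) := fun f b => by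
    rw [dotProduct_comm, dotProduct_mulVec, ← mulVec_transpose, dotProduct_comm]
  have hiso : (K *ᵥ e) ⬝ᵥ (K *ᵥ e) = e ⬝ᵥ e := by
    rw [hadj, mulVec_mulVec, hK, one_mulVec]
  simp only [sub_dotProduct, dotProduct_sub, hiso]
  simp only [hadj, dotProduct_comm a (K *ᵥ e), dotProduct_comm (Kᵀ *ᵥ a) e]
  ring

end OrthonormalColumns

theorem exists_orthonormal_columns_le_range {l r : ℕ} (hrl : r ≤ l)
    (V : Submodule ℝ (Fin l → ℝ)) (hV : finrank ℝ V ≤ r) :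
    ∃ X : Matrix (Fin l) (Fin r) ℝ, Xᵀ * X = 1 ∧ V ≤ LinearMap.range X.mulVecLin := by
  obtain ⟨W, hVW, hW⟩ :=
    (V.map (WithLp.linearEquiv 2 ℝ (Fin l → ℝ)).symm.toLinearMap).exists_le_finrank_eq
      (n := r) (by rwa [LinearEquiv.finrank_map_eq]) (by simpa using hrl)
  let b := (stdOrthonormalBasis ℝ W).reindex (finCongr hW)
  refine ⟨of fun i a => (b a : EuclideanSpace ℝ (Fin l)) i, ?_, fun v hv => ?_⟩
  · ext a a'
    have h := congrFun₂
      (gram_eq_one_iff_orthonormal.mpr (b.orthonormal.comp_linearIsometry W.subtypeₗᵢ)) a a'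
    simpa [gram_apply, mul_apply, PiLp.inner_apply, mul_comm] using h
  · have hvW : WithLp.toLp 2 v ∈ W := hVW (Submodule.mem_map_of_mem hv)
    refine ⟨b.repr ⟨_, hvW⟩, funext fun i => ?_⟩
    have h := congrArg (fun w : W => (w : EuclideanSpace ℝ (Fin l)) i) (b.sum_repr ⟨_, hvW⟩)
    simpa [mulVec, dotProduct, mul_comm] using h

theorem finrank_span_le_of_subset_range {K : Type*} [Field K] {l r : ℕ}
    (X : Matrix (Fin l) (Fin r) K) {s : Set (Fin l → K)}
    (hs : s ⊆ LinearMap.range X.mulVecLin) : finrank K (Submodule.span K s) ≤ r :=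
  (Submodule.finrank_mono (Submodule.span_le.mpr hs)).trans X.rank_le_width

end Matrix

namespace Tensor3

variable {l m n p q r : ℕ}

def flatten (A : Fin l → Fin m → Fin n → ℝ) : Fin l × Fin m × Fin n → ℝ :=
  fun x => A x.1 x.2.1 x.2.2

theorem flatten_injective : Function.Injective (flatten (l := l) (m := m) (n := n)) :=
  fun _ _ h => funext₃ fun i j k => congrFun h (i, j, k)

theorem flatten_sub (A B : Fin l → Fin m → Fin n → ℝ) :
    flatten (A - B) = flatten A - flatten B := rfl

theorem tnorm_sq_eq (A : Fin l → Fin m → Fin n → ℝ) :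
    tnorm A ^ 2 = flatten A ⬝ᵥ flatten A := by
  rw [tnorm, Real.sq_sqrt (by positivity)]
  simp [dotProduct, flatten, Fintype.sum_prod_type, sq]

theorem flatten_tmul (U : Matrix (Fin p) (Fin l) ℝ) (V : Matrix (Fin q) (Fin m) ℝ)
    (W : Matrix (Fin r) (Fin n) ℝ) (A : Fin l → Fin m → Fin n → ℝ) :
    flatten (tmul U V W A) = (U ⊗ₖ (V ⊗ₖ W)) *ᵥ flatten A := by
  funext x
  simp [tmul, flatten, mulVec, dotProduct, Fintype.sum_prod_type, mul_assoc]

theorem flatten_contr (A : Fin l → Fin m → Fin n → ℝ) (X : Matrix (Fin l) (Fin p) ℝ)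
    (Y : Matrix (Fin m) (Fin q) ℝ) (Z : Matrix (Fin n) (Fin r) ℝ) :
    flatten (contr A X Y Z) = (X ⊗ₖ (Y ⊗ₖ Z))ᵀ *ᵥ flatten A := by
  rw [contr, flatten_tmul, kroneckerMap_transpose, kroneckerMap_transpose]

theorem tmul_tmul {a b c : ℕ} (U : Matrix (Fin p) (Fin l) ℝ) (V : Matrix (Fin q) (Fin m) ℝ)
    (W : Matrix (Fin r) (Fin n) ℝ) (U' : Matrix (Fin l) (Fin a) ℝ)
    (V' : Matrix (Fin m) (Fin b) ℝ) (W' : Matrix (Fin n) (Fin c) ℝ)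
    (A : Fin a → Fin b → Fin c → ℝ) :
    tmul U V W (tmul U' V' W' A) = tmul (U * U') (V * V') (W * W') A := by
  apply flatten_injective
  simp only [flatten_tmul, mulVec_mulVec, mul_kronecker_mul]

section Orthonormal

variable {X : Matrix (Fin l) (Fin p) ℝ} {Y : Matrix (Fin m) (Fin q) ℝ}
  {Z : Matrix (Fin n) (Fin r) ℝ}

theorem tnorm_sub_tmul_sq (hX : Xᵀ * X = 1) (hY : Yᵀ * Y = 1) (hZ : Zᵀ * Z = 1)
    (A : Fin l → Fin m → Fin n → ℝ) (E : Fin p → Fin q → Fin r → ℝ) :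
    tnorm (A - tmul X Y Z E) ^ 2 =
      tnorm A ^ 2 - tnorm (contr A X Y Z) ^ 2 + tnorm (E - contr A X Y Z) ^ 2 := by
  simp only [tnorm_sq_eq, flatten_sub, flatten_tmul, flatten_contr]
  exact dotProduct_sub_mulVec_self
    (transpose_kronecker_mul_self hX (transpose_kronecker_mul_self hY hZ)) _ _

theorem tnorm_sub_tmul_contr_sq (hX : Xᵀ * X = 1) (hY : Yᵀ * Y = 1) (hZ : Zᵀ * Z = 1)
    (A : Fin l → Fin m → Fin n → ℝ) :
    tnorm (A - tmul X Y Z (contr A X Y Z)) ^ 2 = tnorm A ^ 2 - tnorm (contr A X Y Z) ^ 2 := by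
  rw [tnorm_sub_tmul_sq hX hY hZ, sub_self]
  simp [tnorm]

theorem tnorm_contr_sq_le (hX : Xᵀ * X = 1) (hY : Yᵀ * Y = 1) (hZ : Zᵀ * Z = 1)
    (A : Fin l → Fin m → Fin n → ℝ) : tnorm (contr A X Y Z) ^ 2 ≤ tnorm A ^ 2 := by
  have := tnorm_sub_tmul_contr_sq hX hY hZ A
  linarith [sq_nonneg (tnorm (A - tmul X Y Z (contr A X Y Z)))]

end Orthonormal

section Fibers

variable (X : Matrix (Fin l) (Fin p) ℝ) (Y : Matrix (Fin m) (Fin q) ℝ)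
  (Z : Matrix (Fin n) (Fin r) ℝ) (C : Fin p → Fin q → Fin r → ℝ)

theorem tmul_fiber₁ (j : Fin m) (k : Fin n) :
    (fun i => tmul X Y Z C i j k) = X *ᵥ fun α => ∑ β, ∑ γ, Y j β * Z k γ * C α β γ := by
  funext i
  simp only [tmul, mulVec, dotProduct, Finset.mul_sum]
  simp only [mul_comm, mul_left_comm]

theorem tmul_fiber₂ (i : Fin l) (k : Fin n) :
    (fun j => tmul X Y Z C i j k) = Y *ᵥ fun β => ∑ α, ∑ γ, X i α * Z k γ * C α β γ := by
  funext j
  simp only [tmul, mulVec, dotProduct, Finset.mul_sum]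
  rw [Finset.sum_comm]
  simp only [mul_comm, mul_left_comm]

theorem tmul_fiber₃ (i : Fin l) (j : Fin m) :
    (fun k => tmul X Y Z C i j k) = Z *ᵥ fun γ => ∑ α, ∑ β, X i α * Y j β * C α β γ := by
  funext k
  simp only [tmul, mulVec, dotProduct, Finset.mul_sum]
  rw [Finset.sum_comm_cycle]
  simp only [mul_comm, mul_left_comm]

theorem mrankLe_tmul : mrankLe (tmul X Y Z C) p q r := by
  refine ⟨X.finrank_span_le_of_subset_range ?_, Y.finrank_span_le_of_subset_range ?_,
    Z.finrank_span_le_of_subset_range ?_⟩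
  · rintro _ ⟨j, k, rfl⟩
    exact ⟨_, (tmul_fiber₁ X Y Z C j k).symm⟩
  · rintro _ ⟨i, k, rfl⟩
    exact ⟨_, (tmul_fiber₂ X Y Z C i k).symm⟩
  · rintro _ ⟨i, j, rfl⟩
    exact ⟨_, (tmul_fiber₃ X Y Z C i j).symm⟩

end Fibers

theorem tmul_eq_self_of_mulVec_fibers {P : Matrix (Fin l) (Fin l) ℝ}
    {Q : Matrix (Fin m) (Fin m) ℝ} {R : Matrix (Fin n) (Fin n) ℝ} {B : Fin l → Fin m → Fin n → ℝ}
    (hP : ∀ j k, P *ᵥ (fun i => B i j k) = fun i => B i j k)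
    (hQ : ∀ i k, Q *ᵥ (fun j => B i j k) = fun j => B i j k)
    (hR : ∀ i j, R *ᵥ (fun k => B i j k) = fun k => B i j k) :
    tmul P Q R B = B := by
  have hP' : ∀ i j k, ∑ α, P i α * B α j k = B i j k := fun i j k => congrFun (hP j k) i
  have hQ' : ∀ i j k, ∑ β, Q j β * B i β k = B i j k := fun i j k => congrFun (hQ i k) j
  have hR' : ∀ i j k, ∑ γ, R k γ * B i j γ = B i j k := fun i j k => congrFun (hR i j) k
  funext i j k
  simp only [tmul, mul_assoc, ← Finset.mul_sum, hR', hQ', hP']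

theorem exists_orthonormal_tmul_contr_eq_of_mrankLe (hp : p ≤ l) (hq : q ≤ m) (hr : r ≤ n)
    {B : Fin l → Fin m → Fin n → ℝ} (hB : mrankLe B p q r) :
    ∃ (X : Matrix (Fin l) (Fin p) ℝ) (Y : Matrix (Fin m) (Fin q) ℝ)
      (Z : Matrix (Fin n) (Fin r) ℝ), Xᵀ * X = 1 ∧ Yᵀ * Y = 1 ∧ Zᵀ * Z = 1 ∧
        tmul X Y Z (contr B X Y Z) = B := by
  obtain ⟨X, hX, hBX⟩ := exists_orthonormal_columns_le_range hp _ hB.1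
  obtain ⟨Y, hY, hBY⟩ := exists_orthonormal_columns_le_range hq _ hB.2.1
  obtain ⟨Z, hZ, hBZ⟩ := exists_orthonormal_columns_le_range hr _ hB.2.2
  refine ⟨X, Y, Z, hX, hY, hZ, ?_⟩
  rw [contr, tmul_tmul]
  exact tmul_eq_self_of_mulVec_fibers
    (fun j k => mul_transpose_mulVec_of_mem_range hX (hBX (Submodule.subset_span ⟨j, k, rfl⟩)))
    (fun i k => mul_transpose_mulVec_of_mem_range hY (hBY (Submodule.subset_span ⟨i, k, rfl⟩)))
    (fun i j => mul_transpose_mulVec_of_mem_range hZ (hBZ (Submodule.subset_span ⟨i, j, rfl⟩)))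

end Tensor3

open Tensor3

theorem best_low_rank_equiv_max_problem
    (l m n r₁ r₂ r₃ : ℕ) (hr₁ : r₁ ≤ l) (hr₂ : r₂ ≤ m) (hr₃ : r₃ ≤ n)
    (A : Fin l → Fin m → Fin n → ℝ)
    (S : Set ℝ)
    (hS : S = {x : ℝ | ∃ (X : Matrix (Fin l) (Fin r₁) ℝ)
        (Y : Matrix (Fin m) (Fin r₂) ℝ) (Z : Matrix (Fin n) (Fin r₃) ℝ),
        Xᵀ * X = 1 ∧ Yᵀ * Y = 1 ∧ Zᵀ * Z = 1 ∧
        x = tnorm (contr A X Y Z) ^ 2}) :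
    (∀ B : Fin l → Fin m → Fin n → ℝ, mrankLe B r₁ r₂ r₃ →
        tnorm A ^ 2 - sSup S ≤ tnorm (A - B) ^ 2) ∧
    (∀ (X : Matrix (Fin l) (Fin r₁) ℝ) (Y : Matrix (Fin m) (Fin r₂) ℝ)
        (Z : Matrix (Fin n) (Fin r₃) ℝ),
        Xᵀ * X = 1 → Yᵀ * Y = 1 → Zᵀ * Z = 1 →
        mrankLe (tmul X Y Z (contr A X Y Z)) r₁ r₂ r₃ ∧
        tnorm (A - tmul X Y Z (contr A X Y Z)) ^ 2 =
          tnorm A ^ 2 - tnorm (contr A X Y Z) ^ 2) := by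
  have hS_bdd : BddAbove S := ⟨tnorm A ^ 2, by
    rw [hS]
    rintro _ ⟨X, Y, Z, hX, hY, hZ, rfl⟩
    exact tnorm_contr_sq_le hX hY hZ A⟩
  refine ⟨fun B hB => ?_, fun X Y Z hX hY hZ =>
    ⟨mrankLe_tmul X Y Z _, tnorm_sub_tmul_contr_sq hX hY hZ A⟩⟩
  obtain ⟨X, Y, Z, hX, hY, hZ, hB_eq⟩ := exists_orthonormal_tmul_contr_eq_of_mrankLe hr₁ hr₂ hr₃ hB
  have hS_mem : tnorm (contr A X Y Z) ^ 2 ∈ S := hS ▸ ⟨X, Y, Z, hX, hY, hZ, rfl⟩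
  rw [← hB_eq, tnorm_sub_tmul_sq hX hY hZ]
  linarith [le_csSup hS_bdd hS_mem, sq_nonneg (tnorm (contr B X Y Z - contr A X Y Z))]
end

section
/- Let C ∈ ℝ^{m₁×m₂×n} be a nonnegative 3-tensor and let A ∈ ℝ^{m×m×n}, m = m₁+m₂, be the (1,2)-symmetric block tensor whose 3-slices are A(:,:,k) = [[0, C(:,:,k)], [C(:,:,k)ᵀ, 0]]. Suppose u ∈ ℝ^{m₁}, v ∈ ℝ^{m₂}, w ∈ ℝ^{n} are nonnegative unit vectors such that (u,v,w) is the unique (up to simultaneous sign changes) maximizer of |C·(x,y,z)| over unit vectors x, y, z, and that the mode-(1,2) contraction C·(u,v) ∈ ℝ^{n} satisfies C·(u,v) = τ w with τ > 0. Define U ∈ ℝ^{m×2} to be the block matrix with first column (0; v) and second column (u; 0). Then (U,U,w) solves the best rank-(2,2,1) approximation problem for A: for all X, Y ∈ ℝ^{m×2} with orthonormal columns and all unit vectors z ∈ ℝ^{n}, ‖A·(X,Y,z)‖ ≤ ‖A·(U,U,w)‖. -/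
/-!
Let `τ = C·(u,v,w)`, the maximal value of `|C·(x,y,z)|` on unit vectors. By homogeneity,
`|C·(x,y,z)| ≤ τ ‖x‖ ‖y‖ ‖z‖`; splitting `x, y ∈ ℝ^{m₁+m₂}` into their blocks and applying
AM–GM to each of the two nonzero blocks of `A` gives `|A·(x,y,z)| ≤ τ (‖x‖² + ‖y‖²) / 2 = τ`
for unit `x, y, z`. So for unit `y, z` the linear form `x ↦ A·(x,y,z)` has norm at most `τ`,
and Bessel's inequality bounds each column of `A·(X,Y,z)` by `τ`, whence
`‖A·(X,Y,z)‖² ≤ 2τ²`. At `(U,U,w)` the contraction is `[[0,τ],[τ,0]]`, which attains this.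
-/

/-- Frobenius norm of the `2×2` contraction `A·(X,Y,z)`. -/
noncomputable def cnorm {ι : Type*} [Fintype ι] {n : ℕ}
    (A : ι → ι → Fin n → ℝ) (X Y : ι → Fin 2 → ℝ) (z : Fin n → ℝ) : ℝ :=
  Real.sqrt (∑ i, ∑ j, (∑ α, ∑ β, ∑ γ, A α β γ * X α i * Y β j * z γ) ^ 2)

open Finset

section Contraction

variable {ι ι' κ κ' μ : Type*} [Fintype ι] [Fintype ι'] [Fintype κ] [Fintype κ'] [Fintype μ]

noncomputable def contract3 (C : ι → κ → μ → ℝ) (x : ι → ℝ) (y : κ → ℝ) (z : μ → ℝ) : ℝ :=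
  ∑ i, ∑ j, ∑ k, C i j k * x i * y j * z k

noncomputable def contract12 (C : ι → κ → μ → ℝ) (x : ι → ℝ) (y : κ → ℝ) (k : μ) : ℝ :=
  ∑ i, ∑ j, C i j k * x i * y j

noncomputable def contract23 (C : ι → κ → μ → ℝ) (y : κ → ℝ) (z : μ → ℝ) (i : ι) : ℝ :=
  ∑ j, ∑ k, C i j k * y j * z k

lemma contract3_eq_sum_contract12_mul (C : ι → κ → μ → ℝ) (x : ι → ℝ) (y : κ → ℝ)
    (z : μ → ℝ) : contract3 C x y z = ∑ k, contract12 C x y k * z k := by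
  simp only [contract3, contract12, sum_mul]
  exact (sum_congr rfl fun _ _ => sum_comm).trans sum_comm

lemma contract3_eq_sum_mul_contract23 (C : ι → κ → μ → ℝ) (x : ι → ℝ) (y : κ → ℝ)
    (z : μ → ℝ) : contract3 C x y z = ∑ i, x i * contract23 C y z i := by
  simp only [contract3, contract23, mul_sum]
  exact sum_congr rfl fun _ _ => sum_congr rfl fun _ _ => sum_congr rfl fun _ _ => by ring

lemma contract3_smul (C : ι → κ → μ → ℝ) (a b c : ℝ) (x : ι → ℝ) (y : κ → ℝ) (z : μ → ℝ) :
    contract3 C (a • x) (b • y) (c • z) = a * b * c * contract3 C x y z := by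
  simp only [contract3, mul_sum, Pi.smul_apply, smul_eq_mul]
  exact sum_congr rfl fun _ _ => sum_congr rfl fun _ _ => sum_congr rfl fun _ _ => by ring

lemma contract3_zero_left (C : ι → κ → μ → ℝ) (y : κ → ℝ) (z : μ → ℝ) :
    contract3 C 0 y z = 0 := by
  simp [contract3]

lemma contract3_zero_middle (C : ι → κ → μ → ℝ) (x : ι → ℝ) (z : μ → ℝ) :
    contract3 C x 0 z = 0 := by
  simp [contract3]

lemma eq_zero_of_sum_sq_eq_zero {x : ι → ℝ} (hx : ∑ i, x i ^ 2 = 0) : x = 0 := by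
  ext i
  simpa using congrFun ((Fintype.sum_eq_zero_iff_of_nonneg fun i => sq_nonneg (x i)).1 hx) i

lemma sqrt_sum_sq_ne_zero {x : ι → ℝ} (hx : ∑ i, x i ^ 2 ≠ 0) : √(∑ i, x i ^ 2) ≠ 0 :=
  (Real.sqrt_ne_zero (sum_nonneg fun i _ => sq_nonneg (x i))).2 hx

lemma sum_sq_inv_sqrt_smul {x : ι → ℝ} (hx : ∑ i, x i ^ 2 ≠ 0) :
    ∑ i, ((√(∑ i, x i ^ 2))⁻¹ • x) i ^ 2 = 1 := by
  simp only [Pi.smul_apply, smul_eq_mul, mul_pow, ← mul_sum, inv_pow,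
    Real.sq_sqrt (sum_nonneg fun i _ => sq_nonneg (x i))]
  exact inv_mul_cancel₀ hx

lemma abs_contract3_le_of_unit_bound {C : ι → κ → μ → ℝ} {τ : ℝ}
    (hC : ∀ x y z, ∑ i, x i ^ 2 = 1 → ∑ j, y j ^ 2 = 1 → ∑ k, z k ^ 2 = 1 →
      |contract3 C x y z| ≤ τ)
    (x : ι → ℝ) (y : κ → ℝ) (z : μ → ℝ) :
    |contract3 C x y z| ≤ τ * (√(∑ i, x i ^ 2) * √(∑ j, y j ^ 2) * √(∑ k, z k ^ 2)) := by
  rcases eq_or_ne (∑ i, x i ^ 2) 0 with hx | hx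
  · simp [eq_zero_of_sum_sq_eq_zero hx, contract3]
  rcases eq_or_ne (∑ j, y j ^ 2) 0 with hy | hy
  · simp [eq_zero_of_sum_sq_eq_zero hy, contract3]
  rcases eq_or_ne (∑ k, z k ^ 2) 0 with hz | hz
  · simp [eq_zero_of_sum_sq_eq_zero hz, contract3]
  have hnorm : 0 < √(∑ i, x i ^ 2) * √(∑ j, y j ^ 2) * √(∑ k, z k ^ 2) := by
    have := sqrt_sum_sq_ne_zero hx
    have := sqrt_sum_sq_ne_zero hy
    have := sqrt_sum_sq_ne_zero hz
    positivity
  have h := hC _ _ _ (sum_sq_inv_sqrt_smul hx) (sum_sq_inv_sqrt_smul hy)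
    (sum_sq_inv_sqrt_smul hz)
  rw [contract3_smul, ← mul_inv, ← mul_inv, abs_mul, abs_inv, abs_of_pos hnorm,
    inv_mul_le_iff₀ hnorm] at h
  linarith

lemma sum_sq_le_sq_of_abs_sum_mul_le {g : ι → ℝ} {τ : ℝ}
    (hg : ∀ x : ι → ℝ, ∑ i, x i ^ 2 = 1 → |∑ i, x i * g i| ≤ τ) : ∑ i, g i ^ 2 ≤ τ ^ 2 := by
  rcases eq_or_ne (∑ i, g i ^ 2) 0 with h0 | h0
  · rw [h0]
    positivity
  have hnonneg : 0 ≤ ∑ i, g i ^ 2 := sum_nonneg fun i _ => sq_nonneg (g i)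
  have hpos : 0 < √(∑ i, g i ^ 2) := (Real.sqrt_nonneg _).lt_of_ne' (sqrt_sum_sq_ne_zero h0)
  have hval : ∑ i, ((√(∑ i, g i ^ 2))⁻¹ • g) i * g i = √(∑ i, g i ^ 2) := by
    simp only [Pi.smul_apply, smul_eq_mul, mul_assoc, ← mul_sum, ← sq]
    rw [inv_mul_eq_iff_eq_mul₀ hpos.ne', Real.mul_self_sqrt hnonneg]
  have h := hg _ (sum_sq_inv_sqrt_smul h0)
  rw [hval, abs_of_pos hpos] at h
  calc ∑ i, g i ^ 2 = √(∑ i, g i ^ 2) ^ 2 := (Real.sq_sqrt hnonneg).symm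
    _ ≤ τ ^ 2 := pow_le_pow_left₀ hpos.le h 2

lemma sum_sq_sum_mul_le_of_orthonormal [DecidableEq κ] {X : ι → κ → ℝ}
    (hX : ∀ c c', ∑ i, X i c * X i c' = if c = c' then 1 else 0) (g : ι → ℝ) :
    ∑ c, (∑ i, X i c * g i) ^ 2 ≤ ∑ i, g i ^ 2 := by
  have hON : Orthonormal ℝ fun c => WithLp.toLp 2 fun i => X i c := by
    rw [orthonormal_iff_ite]
    intro c c'
    simp [EuclideanSpace.inner_toLp_toLp, dotProduct, ← hX c c', mul_comm]
  simpa [EuclideanSpace.inner_toLp_toLp, dotProduct, EuclideanSpace.real_norm_sq_eq, mul_comm]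
    using hON.sum_inner_products_le (WithLp.toLp 2 g) (s := univ)

lemma sum_sq_contract3_le_of_orthonormal [DecidableEq κ] [DecidableEq κ']
    {A : ι → ι' → μ → ℝ} {τ : ℝ} {z : μ → ℝ}
    (hA : ∀ x y, ∑ i, x i ^ 2 = 1 → ∑ j, y j ^ 2 = 1 → |contract3 A x y z| ≤ τ)
    {X : ι → κ → ℝ} {Y : ι' → κ' → ℝ}
    (hX : ∀ c c', ∑ i, X i c * X i c' = if c = c' then 1 else 0)
    (hY : ∀ c c', ∑ j, Y j c * Y j c' = if c = c' then 1 else 0) :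
    ∑ c, ∑ c', contract3 A (fun i => X i c) (fun j => Y j c') z ^ 2 ≤
      Fintype.card κ' * τ ^ 2 := by
  rw [sum_comm, ← nsmul_eq_mul, ← card_univ, ← sum_const]
  refine sum_le_sum fun c' _ => ?_
  have hYc : ∑ j, Y j c' ^ 2 = 1 := by simpa [sq] using hY c' c'
  simp only [contract3_eq_sum_mul_contract23]
  refine (sum_sq_sum_mul_le_of_orthonormal hX _).trans
    (sum_sq_le_sq_of_abs_sum_mul_le fun x hx => ?_)
  rw [← contract3_eq_sum_mul_contract23]
  exact hA x _ hx hYc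

lemma cnorm_eq_sqrt_sum_sq_contract3 {n : ℕ} (A : ι → ι → Fin n → ℝ) (X Y : ι → Fin 2 → ℝ)
    (z : Fin n → ℝ) :
    cnorm A X Y z = √(∑ c, ∑ c', contract3 A (fun α => X α c) (fun β => Y β c') z ^ 2) :=
  rfl

end Contraction

section BlockTensor

variable {ι κ μ : Type*} [Fintype ι] [Fintype κ] [Fintype μ]

def blockTensor (C : ι → κ → μ → ℝ) : ι ⊕ κ → ι ⊕ κ → μ → ℝ
  | .inl i, .inr j, k => C i j k
  | .inr j, .inl i, k => C i j k
  | _, _, _ => 0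

lemma contract3_blockTensor (C : ι → κ → μ → ℝ) (x y : ι ⊕ κ → ℝ) (z : μ → ℝ) :
    contract3 (blockTensor C) x y z =
      contract3 C (x ∘ Sum.inl) (y ∘ Sum.inr) z + contract3 C (y ∘ Sum.inl) (x ∘ Sum.inr) z := by
  simp only [contract3, blockTensor, Fintype.sum_sum_type, zero_mul, sum_const_zero, zero_add,
    add_zero, Function.comp_apply, add_right_inj]
  rw [sum_comm]
  exact sum_congr rfl fun _ _ => sum_congr rfl fun _ _ => sum_congr rfl fun _ _ => by ring

lemma abs_contract3_blockTensor_le {C : ι → κ → μ → ℝ} {τ : ℝ} (hτ : 0 ≤ τ)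
    (hC : ∀ x y z, ∑ i, x i ^ 2 = 1 → ∑ j, y j ^ 2 = 1 → ∑ k, z k ^ 2 = 1 →
      |contract3 C x y z| ≤ τ)
    {x y : ι ⊕ κ → ℝ} {z : μ → ℝ}
    (hx : ∑ a, x a ^ 2 = 1) (hy : ∑ a, y a ^ 2 = 1) (hz : ∑ k, z k ^ 2 = 1) :
    |contract3 (blockTensor C) x y z| ≤ τ := by
  have hbound (x' : ι → ℝ) (y' : κ → ℝ) :
      |contract3 C x' y' z| ≤ τ * ((∑ i, x' i ^ 2 + ∑ j, y' j ^ 2) / 2) := by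
    have h := abs_contract3_le_of_unit_bound hC x' y' z
    rw [hz, Real.sqrt_one, mul_one] at h
    refine h.trans (mul_le_mul_of_nonneg_left ?_ hτ)
    have hamgm := two_mul_le_add_sq (√(∑ i, x' i ^ 2)) (√(∑ j, y' j ^ 2))
    rw [Real.sq_sqrt (sum_nonneg fun i _ => sq_nonneg _),
      Real.sq_sqrt (sum_nonneg fun j _ => sq_nonneg _)] at hamgm
    linarith
  rw [Fintype.sum_sum_type] at hx hy
  rw [contract3_blockTensor]
  calc _ ≤ _ := abs_add_le _ _
    _ ≤ _ := add_le_add (hbound _ _) (hbound _ _)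
    _ = τ := by
      simp only [Function.comp_apply]
      linear_combination (τ / 2) * hx + (τ / 2) * hy

lemma sum_sq_contract3_blockTensor_of_columns (C : ι → κ → μ → ℝ) (u : ι → ℝ) (v : κ → ℝ)
    (w : μ → ℝ) (U : ι ⊕ κ → Fin 2 → ℝ)
    (hUl : ∀ i, U (Sum.inl i) 0 = 0 ∧ U (Sum.inl i) 1 = u i)
    (hUr : ∀ j, U (Sum.inr j) 0 = v j ∧ U (Sum.inr j) 1 = 0) :
    ∑ c, ∑ c', contract3 (blockTensor C) (fun a => U a c) (fun a => U a c') w ^ 2 =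
      2 * contract3 C u v w ^ 2 := by
  have h0l : (fun a => U a 0) ∘ Sum.inl = 0 := funext fun i => (hUl i).1
  have h1l : (fun a => U a 1) ∘ Sum.inl = u := funext fun i => (hUl i).2
  have h0r : (fun a => U a 0) ∘ Sum.inr = v := funext fun j => (hUr j).1
  have h1r : (fun a => U a 1) ∘ Sum.inr = 0 := funext fun j => (hUr j).2
  simp only [Fin.sum_univ_two, contract3_blockTensor, h0l, h1l, h0r, h1r, contract3_zero_left,
    contract3_zero_middle]
  ring

end BlockTensor

theorem best_rank221_of_block_tensor_general
    (m₁ m₂ n : ℕ)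
    (C : Fin m₁ → Fin m₂ → Fin n → ℝ)
    (A : (Fin m₁ ⊕ Fin m₂) → (Fin m₁ ⊕ Fin m₂) → Fin n → ℝ)
    (hA : ∀ k, (∀ i j, A (Sum.inl i) (Sum.inr j) k = C i j k) ∧
               (∀ i j, A (Sum.inr j) (Sum.inl i) k = C i j k) ∧
               (∀ i i', A (Sum.inl i) (Sum.inl i') k = 0) ∧
               (∀ j j', A (Sum.inr j) (Sum.inr j') k = 0))
    (u : Fin m₁ → ℝ) (v : Fin m₂ → ℝ) (w : Fin n → ℝ)
    (hw : ∑ k, w k ^ 2 = 1)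
    -- `(u,v,w)` maximizes `|C·(x,y,z)|` over unit vectors …
    (hmax : ∀ (x : Fin m₁ → ℝ) (y : Fin m₂ → ℝ) (z : Fin n → ℝ),
      ∑ i, x i ^ 2 = 1 → ∑ j, y j ^ 2 = 1 → ∑ k, z k ^ 2 = 1 →
      |∑ i, ∑ j, ∑ k, C i j k * x i * y j * z k| ≤
        ∑ i, ∑ j, ∑ k, C i j k * u i * v j * w k)
    (τ : ℝ) (hτ : 0 < τ)
    -- mode-(1,2) contraction: `C·(u,v) = τ w`
    (hCuv : ∀ k, (∑ i, ∑ j, C i j k * u i * v j) = τ * w k)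
    -- `U` is the block matrix with columns `(0; v)` and `(u; 0)`
    (U : (Fin m₁ ⊕ Fin m₂) → Fin 2 → ℝ)
    (hUl : ∀ i, U (Sum.inl i) 0 = 0 ∧ U (Sum.inl i) 1 = u i)
    (hUr : ∀ j, U (Sum.inr j) 0 = v j ∧ U (Sum.inr j) 1 = 0) :
    ∀ (X Y : (Fin m₁ ⊕ Fin m₂) → Fin 2 → ℝ) (z : Fin n → ℝ),
      (∀ c c' : Fin 2, ∑ α, X α c * X α c' = if c = c' then 1 else 0) →
      (∀ c c' : Fin 2, ∑ α, Y α c * Y α c' = if c = c' then 1 else 0) →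
      ∑ k, z k ^ 2 = 1 →
      cnorm A X Y z ≤ cnorm A U U w := by
  intro X Y z hX hY hz
  obtain rfl : A = blockTensor C := by
    ext (a | a) (b | b) k
    all_goals simp only [blockTensor, (hA k).1, (hA k).2.1, (hA k).2.2.1, (hA k).2.2.2]
  have hτC : contract3 C u v w = τ :=
    calc contract3 C u v w = ∑ k, τ * w k * w k := by
          simp only [contract3_eq_sum_contract12_mul, contract12, hCuv]
      _ = τ := by simp only [mul_assoc, ← sq, ← mul_sum, hw, mul_one]
  have hCτ : ∀ x y z, ∑ i, x i ^ 2 = 1 → ∑ j, y j ^ 2 = 1 → ∑ k, z k ^ 2 = 1 →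
      |contract3 C x y z| ≤ τ := hτC ▸ hmax
  rw [cnorm_eq_sqrt_sum_sq_contract3, cnorm_eq_sqrt_sum_sq_contract3,
    sum_sq_contract3_blockTensor_of_columns C u v w U hUl hUr, hτC]
  calc _ ≤ √(Fintype.card (Fin 2) * τ ^ 2) :=
        Real.sqrt_le_sqrt <| sum_sq_contract3_le_of_orthonormal
          (fun x y hx hy => abs_contract3_blockTensor_le hτ.le hCτ hx hy hz) hX hY
    _ = √(2 * τ ^ 2) := by rw [Fintype.card_fin, Nat.cast_ofNat]

theorem best_rank221_of_block_tensor
    (m₁ m₂ n : ℕ)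
    (C : Fin m₁ → Fin m₂ → Fin n → ℝ) (hC : ∀ i j k, 0 ≤ C i j k)
    (A : (Fin m₁ ⊕ Fin m₂) → (Fin m₁ ⊕ Fin m₂) → Fin n → ℝ)
    (hA : ∀ k, (∀ i j, A (Sum.inl i) (Sum.inr j) k = C i j k) ∧
               (∀ i j, A (Sum.inr j) (Sum.inl i) k = C i j k) ∧
               (∀ i i', A (Sum.inl i) (Sum.inl i') k = 0) ∧
               (∀ j j', A (Sum.inr j) (Sum.inr j') k = 0))
    (u : Fin m₁ → ℝ) (v : Fin m₂ → ℝ) (w : Fin n → ℝ)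
    (hu0 : ∀ i, 0 ≤ u i) (hv0 : ∀ j, 0 ≤ v j) (hw0 : ∀ k, 0 ≤ w k)
    (hu : ∑ i, u i ^ 2 = 1) (hv : ∑ j, v j ^ 2 = 1) (hw : ∑ k, w k ^ 2 = 1)
    -- `(u,v,w)` maximizes `|C·(x,y,z)|` over unit vectors …
    (hmax : ∀ (x : Fin m₁ → ℝ) (y : Fin m₂ → ℝ) (z : Fin n → ℝ),
      ∑ i, x i ^ 2 = 1 → ∑ j, y j ^ 2 = 1 → ∑ k, z k ^ 2 = 1 →
      |∑ i, ∑ j, ∑ k, C i j k * x i * y j * z k| ≤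
        ∑ i, ∑ j, ∑ k, C i j k * u i * v j * w k)
    -- … and is the unique maximizer, up to simultaneous sign changes.
    (huniq : ∀ (x : Fin m₁ → ℝ) (y : Fin m₂ → ℝ) (z : Fin n → ℝ),
      ∑ i, x i ^ 2 = 1 → ∑ j, y j ^ 2 = 1 → ∑ k, z k ^ 2 = 1 →
      |∑ i, ∑ j, ∑ k, C i j k * x i * y j * z k| =
        ∑ i, ∑ j, ∑ k, C i j k * u i * v j * w k →
      ∃ ε δ γ : ℝ, (ε = 1 ∨ ε = -1) ∧ (δ = 1 ∨ δ = -1) ∧ (γ = 1 ∨ γ = -1) ∧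
        x = ε • u ∧ y = δ • v ∧ z = γ • w)
    (τ : ℝ) (hτ : 0 < τ)
    -- mode-(1,2) contraction: `C·(u,v) = τ w`
    (hCuv : ∀ k, (∑ i, ∑ j, C i j k * u i * v j) = τ * w k)
    -- `U` is the block matrix with columns `(0; v)` and `(u; 0)`
    (U : (Fin m₁ ⊕ Fin m₂) → Fin 2 → ℝ)
    (hUl : ∀ i, U (Sum.inl i) 0 = 0 ∧ U (Sum.inl i) 1 = u i)
    (hUr : ∀ j, U (Sum.inr j) 0 = v j ∧ U (Sum.inr j) 1 = 0) :
    ∀ (X Y : (Fin m₁ ⊕ Fin m₂) → Fin 2 → ℝ) (z : Fin n → ℝ),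
      (∀ c c' : Fin 2, ∑ α, X α c * X α c' = if c = c' then 1 else 0) →
      (∀ c c' : Fin 2, ∑ α, Y α c * Y α c' = if c = c' then 1 else 0) →
      ∑ k, z k ^ 2 = 1 →
      cnorm A X Y z ≤ cnorm A U U w :=
  best_rank221_of_block_tensor_general m₁ m₂ n C A hA u v w hw hmax τ hτ hCuv U hUl hUr
end
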